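/- arXiv:2305.14939 — 2 statements merged into one kernel-verified Lean document; each statement's English description precedes it below -/
import Mathlib

section
/- Let a, b ∈ Δₙ be strictly positive probability vectors, C ∈ ℝ₊^{n×n}, γ > 0, K := exp(−C/γ). (i) For the Sinkhorn iterates (f_k, g_k) started from arbitrary f₀, g₀ ∈ ℝⁿ, for every k ≥ 2: max_i(f_k − γ log a)_i − min_i(f_k − γ log a)_i ≤ ‖C‖_∞ and max_j(g_k − γ log b)_j − min_j(g_k − γ log b)_j ≤ ‖C‖_∞. (ii) For any dual optimal solution (f*, g*), i.e. any pair such that P* := diag(e^{f*/γ}) K diag(e^{g*/γ}) satisfies P*𝟏ₙ = a and P*ᵀ𝟏ₙ = b, the same two inequalities hold with (f*, g*) in place of (f_k, g_k). -/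
/-!
After a Sinkhorn update, `f − γ log a` is the soft minimum `i ↦ −γ log ∑ⱼ e^{(gⱼ − Cᵢⱼ)/γ}`.
A soft minimum is monotone and commutes with adding constants, and `0 ≤ C ≤ ‖C‖_∞` puts each
row of `C` below any other row plus `‖C‖_∞`; hence its values at two rows differ by at most
`‖C‖_∞`. From the second step on both potentials are such updates, and a dual optimal pair is
a fixed point of both updates.
-/

/-- The dual entropic OT objective
`h(f,g) = ⟨f,a⟩ + ⟨g,b⟩ − γ Σ_{i,j} exp((f_i + g_j − C_{ij})/γ)`. -/
noncomputable def dualObj {n : ℕ} (a b : Fin n → ℝ) (C : Matrix (Fin n) (Fin n) ℝ)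
    (γ : ℝ) (f g : Fin n → ℝ) : ℝ :=
  (∑ i, f i * a i) + (∑ j, g j * b j) -
    γ * ∑ i, ∑ j, Real.exp ((f i + g j - C i j) / γ)

/-- The transport plan `P = diag(e^{f/γ}) K diag(e^{g/γ})` with `K = exp(−C/γ)`. -/
noncomputable def plan {n : ℕ} (C : Matrix (Fin n) (Fin n) ℝ) (γ : ℝ)
    (f g : Fin n → ℝ) : Matrix (Fin n) (Fin n) ℝ :=
  fun i j => Real.exp (f i / γ) * Real.exp (-C i j / γ) * Real.exp (g j / γ)

/-- `(f k, g k)` is the sequence of Sinkhorn iterates (in dual form): for even `k`,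
`f (k+1) = γ log a − γ log (K e^{g k / γ})` and `g (k+1) = g k`; for odd `k`,
`f (k+1) = f k` and `g (k+1) = γ log b − γ log (Kᵀ e^{f k / γ})`,
where `K = exp(−C/γ)`. -/
def SinkhornSeq {n : ℕ} (a b : Fin n → ℝ) (C : Matrix (Fin n) (Fin n) ℝ) (γ : ℝ)
    (f g : ℕ → Fin n → ℝ) : Prop :=
  ∀ k : ℕ,
    (Even k →
      f (k+1) = (fun i => γ * Real.log (a i) -
        γ * Real.log (∑ j, Real.exp (-C i j / γ) * Real.exp (g k j / γ))) ∧
      g (k+1) = g k) ∧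
    (¬ Even k →
      f (k+1) = f k ∧
      g (k+1) = (fun j => γ * Real.log (b j) -
        γ * Real.log (∑ i, Real.exp (-C i j / γ) * Real.exp (f k i / γ))))

open Real Finset Matrix

section Softmin

variable {ι κ : Type*}

theorem ciSup_sub_ciInf_le_of_forall_le_add {α : Type*} [Nonempty α] {u : α → ℝ} {d : ℝ}
    (h : ∀ x y, u x ≤ u y + d) : (⨆ x, u x) - (⨅ x, u x) ≤ d := by
  have : (⨆ x, u x) ≤ (⨅ x, u x) + d :=
    ciSup_le fun x => sub_le_iff_le_add.mp <| le_ciInf fun y => sub_le_iff_le_add.mpr (h x y)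
  linarith

theorem le_iSup_iSup_abs [Finite ι] [Finite κ] (C : ι → κ → ℝ) (i : ι) (j : κ) :
    C i j ≤ ⨆ i, ⨆ j, |C i j| :=
  calc C i j ≤ |C i j| := le_abs_self _
    _ ≤ ⨆ j, |C i j| := le_ciSup (f := fun j => |C i j|) (Set.finite_range _).bddAbove j
    _ ≤ ⨆ i, ⨆ j, |C i j| := le_ciSup (f := fun i => ⨆ j, |C i j|) (Set.finite_range _).bddAbove i

/-- With `w = e^{g/γ}` this is the `γ`-smoothed `minⱼ (cⱼ - gⱼ)`. -/
noncomputable def softmin [Fintype κ] (γ : ℝ) (w c : κ → ℝ) : ℝ :=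
  -(γ * log (∑ j, exp (-c j / γ) * w j))

theorem softmin_le_softmin_add [Fintype κ] [Nonempty κ] {γ : ℝ} (hγ : 0 < γ) {w : κ → ℝ}
    (hw : ∀ j, 0 < w j) {c c' : κ → ℝ} {t : ℝ} (h : ∀ j, c j ≤ c' j + t) :
    softmin γ w c ≤ softmin γ w c' + t := by
  have hpos : ∀ c : κ → ℝ, 0 < ∑ j, exp (-c j / γ) * w j := fun c =>
    sum_pos (fun j _ => mul_pos (exp_pos _) (hw j)) univ_nonempty
  have hsum : ∑ j, exp (-c' j / γ) * w j ≤ exp (t / γ) * ∑ j, exp (-c j / γ) * w j := by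
    rw [mul_sum]
    refine sum_le_sum fun j _ => ?_
    rw [← mul_assoc, ← exp_add, ← add_div]
    gcongr ?_ * _
    · exact (hw j).le
    · exact exp_le_exp.mpr (div_le_div_of_nonneg_right (by linarith [h j]) hγ.le)
  have hlog := log_le_log (hpos c') hsum
  rw [log_mul (exp_ne_zero _) (hpos c).ne', log_exp] at hlog
  have := mul_le_mul_of_nonneg_left hlog hγ.le
  rw [mul_add, mul_div_cancel₀ _ hγ.ne'] at this
  unfold softmin
  linarith

theorem softmin_oscillation_le [Nonempty ι] [Fintype κ] [Nonempty κ] {γ : ℝ} (hγ : 0 < γ)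
    {w : κ → ℝ} (hw : ∀ j, 0 < w j) {C : Matrix ι κ ℝ} {d : ℝ} (hC : ∀ i i' j, C i j ≤ C i' j + d) :
    (⨆ i, softmin γ w (C i)) - (⨅ i, softmin γ w (C i)) ≤ d :=
  ciSup_sub_ciInf_le_of_forall_le_add fun i i' => softmin_le_softmin_add hγ hw (hC i i')

end Softmin

section Sinkhorn

variable {ι κ : Type*} [Fintype κ] {γ : ℝ}

noncomputable def sinkhornUpdate (γ : ℝ) (a : ι → ℝ) (C : Matrix ι κ ℝ) (g : κ → ℝ) : ι → ℝ :=
  fun i => γ * log (a i) - γ * log (∑ j, exp (-C i j / γ) * exp (g j / γ))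

theorem sinkhornUpdate_sub_log (a : ι → ℝ) (C : Matrix ι κ ℝ) (g : κ → ℝ) (i : ι) :
    sinkhornUpdate γ a C g i - γ * log (a i) = softmin γ (fun j => exp (g j / γ)) (C i) := by
  unfold sinkhornUpdate softmin
  ring

theorem sinkhornUpdate_oscillation_le [Nonempty ι] [Nonempty κ] (hγ : 0 < γ) (a : ι → ℝ)
    {C : Matrix ι κ ℝ} {d : ℝ} (hC : ∀ i i' j, C i j ≤ C i' j + d) (g : κ → ℝ) :
    (⨆ i, (sinkhornUpdate γ a C g i - γ * log (a i))) -
      (⨅ i, (sinkhornUpdate γ a C g i - γ * log (a i))) ≤ d := by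
  simpa only [sinkhornUpdate_sub_log] using softmin_oscillation_le hγ (fun j => exp_pos _) hC

end Sinkhorn

section SquareCost

variable {n : ℕ} {a b : Fin n → ℝ} {C : Matrix (Fin n) (Fin n) ℝ} {γ : ℝ}

theorem SinkhornSeq.exists_f_eq_sinkhornUpdate {f g : ℕ → Fin n → ℝ}
    (hiter : SinkhornSeq a b C γ f g) {k : ℕ} (hk : 1 ≤ k) : ∃ ψ, f k = sinkhornUpdate γ a C ψ := by
  induction k, hk using Nat.le_induction with
  | base => exact ⟨g 0, ((hiter 0).1 Even.zero).1⟩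
  | succ k _ ih =>
    by_cases hk : Even k
    · exact ⟨g k, ((hiter k).1 hk).1⟩
    · obtain ⟨ψ, hψ⟩ := ih
      exact ⟨ψ, ((hiter k).2 hk).1.trans hψ⟩

theorem SinkhornSeq.exists_g_eq_sinkhornUpdate {f g : ℕ → Fin n → ℝ}
    (hiter : SinkhornSeq a b C γ f g) {k : ℕ} (hk : 2 ≤ k) : ∃ ψ, g k = sinkhornUpdate γ b Cᵀ ψ := by
  induction k, hk using Nat.le_induction with
  | base => exact ⟨f 1, ((hiter 1).2 Nat.not_even_one).2⟩
  | succ k _ ih =>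
    by_cases hk : Even k
    · obtain ⟨ψ, hψ⟩ := ih
      exact ⟨ψ, ((hiter k).1 hk).2.trans hψ⟩
    · exact ⟨f k, ((hiter k).2 hk).2⟩

theorem plan_transpose (C : Matrix (Fin n) (Fin n) ℝ) (γ : ℝ) (f g : Fin n → ℝ) (i j : Fin n) :
    plan Cᵀ γ g f j i = plan C γ f g i j := by
  simp only [plan, transpose_apply]
  ring

theorem eq_sinkhornUpdate_of_row_sums (hγ : γ ≠ 0) {f g : Fin n → ℝ}
    (h : ∀ i, ∑ j, plan C γ f g i j = a i) : f = sinkhornUpdate γ a C g := by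
  funext i
  have hS : 0 < ∑ j, exp (-C i j / γ) * exp (g j / γ) :=
    sum_pos (fun j _ => mul_pos (exp_pos _) (exp_pos _)) ⟨i, mem_univ i⟩
  have ha : a i = exp (f i / γ) * ∑ j, exp (-C i j / γ) * exp (g j / γ) := by
    simp only [← h i, plan, mul_sum, mul_assoc]
  rw [sinkhornUpdate, ha, log_mul (exp_ne_zero _) hS.ne', log_exp]
  field_simp
  ring

theorem eq_sinkhornUpdate_of_col_sums (hγ : γ ≠ 0) {f g : Fin n → ℝ}
    (h : ∀ j, ∑ i, plan C γ f g i j = b j) : g = sinkhornUpdate γ b Cᵀ f :=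
  eq_sinkhornUpdate_of_row_sums hγ fun j => by simpa only [plan_transpose] using h j

end SquareCost

theorem sinkhorn_equicontinuity_corollary_general {n : ℕ} (a b : Fin n → ℝ)
    (C : Matrix (Fin n) (Fin n) ℝ) (γ : ℝ) (hγ : 0 < γ)
    (hC : ∀ i j, 0 ≤ C i j)
    (f g : ℕ → Fin n → ℝ) (hiter : SinkhornSeq a b C γ f g) :
    (∀ k : ℕ, 2 ≤ k →
      ((⨆ i, (f k i - γ * Real.log (a i))) - (⨅ i, (f k i - γ * Real.log (a i))) ≤
          ⨆ i, ⨆ j, |C i j|) ∧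
      ((⨆ j, (g k j - γ * Real.log (b j))) - (⨅ j, (g k j - γ * Real.log (b j))) ≤
          ⨆ i, ⨆ j, |C i j|)) ∧
    (∀ fs gs : Fin n → ℝ,
      (∀ i, ∑ j, plan C γ fs gs i j = a i) →
      (∀ j, ∑ i, plan C γ fs gs i j = b j) →
      ((⨆ i, (fs i - γ * Real.log (a i))) - (⨅ i, (fs i - γ * Real.log (a i))) ≤
          ⨆ i, ⨆ j, |C i j|) ∧
      ((⨆ j, (gs j - γ * Real.log (b j))) - (⨅ j, (gs j - γ * Real.log (b j))) ≤
          ⨆ i, ⨆ j, |C i j|)) := by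
  rcases isEmpty_or_nonempty (Fin n) with hn | hn
  · simp
  set M := ⨆ i, ⨆ j, |C i j|
  have hrows : ∀ i i' j, C i j ≤ C i' j + M := fun i i' j => by
    linarith [hC i' j, le_iSup_iSup_abs C i j]
  have hcols : ∀ j j' i, Cᵀ j i ≤ Cᵀ j' i + M := fun j j' i => by
    rw [transpose_apply, transpose_apply]
    linarith [hC i j', le_iSup_iSup_abs C i j]
  refine ⟨fun k hk => ⟨?_, ?_⟩, fun fs gs hrow hcol => ⟨?_, ?_⟩⟩
  · obtain ⟨ψ, hψ⟩ := hiter.exists_f_eq_sinkhornUpdate (by omega : 1 ≤ k)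
    exact hψ ▸ sinkhornUpdate_oscillation_le hγ a hrows ψ
  · obtain ⟨ψ, hψ⟩ := hiter.exists_g_eq_sinkhornUpdate hk
    exact hψ ▸ sinkhornUpdate_oscillation_le hγ b hcols ψ
  · exact eq_sinkhornUpdate_of_row_sums hγ.ne' hrow ▸ sinkhornUpdate_oscillation_le hγ a hrows gs
  · exact eq_sinkhornUpdate_of_col_sums hγ.ne' hcol ▸ sinkhornUpdate_oscillation_le hγ b hcols fs

/-- **Equicontinuity corollary for Sinkhorn iterates and dual optimal solutions**
(Corollary 1 of the paper). (i) For every `k ≥ 2`, the Sinkhorn dual iterates satisfy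
`max(f_k − γ log a) − min(f_k − γ log a) ≤ ‖C‖_∞` and
`max(g_k − γ log b) − min(g_k − γ log b) ≤ ‖C‖_∞`.
(ii) The same bounds hold for any dual optimal solution `(f*, g*)`, i.e. any pair
whose plan `diag(e^{f*/γ}) K diag(e^{g*/γ})` has row sums `a` and column sums `b`. -/
theorem sinkhorn_equicontinuity_corollary {n : ℕ} (a b : Fin n → ℝ)
    (C : Matrix (Fin n) (Fin n) ℝ) (γ : ℝ) (hγ : 0 < γ)
    (ha0 : ∀ i, 0 < a i) (hb0 : ∀ j, 0 < b j)
    (ha1 : ∑ i, a i = 1) (hb1 : ∑ j, b j = 1)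
    (hC : ∀ i j, 0 ≤ C i j)
    (f g : ℕ → Fin n → ℝ) (hiter : SinkhornSeq a b C γ f g) :
    (∀ k : ℕ, 2 ≤ k →
      ((⨆ i, (f k i - γ * Real.log (a i))) - (⨅ i, (f k i - γ * Real.log (a i))) ≤
          ⨆ i, ⨆ j, |C i j|) ∧
      ((⨆ j, (g k j - γ * Real.log (b j))) - (⨅ j, (g k j - γ * Real.log (b j))) ≤
          ⨆ i, ⨆ j, |C i j|)) ∧
    (∀ fs gs : Fin n → ℝ,
      (∀ i, ∑ j, plan C γ fs gs i j = a i) →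
      (∀ j, ∑ i, plan C γ fs gs i j = b j) →
      ((⨆ i, (fs i - γ * Real.log (a i))) - (⨅ i, (fs i - γ * Real.log (a i))) ≤
          ⨆ i, ⨆ j, |C i j|) ∧
      ((⨆ j, (gs j - γ * Real.log (b j))) - (⨅ j, (gs j - γ * Real.log (b j))) ≤
          ⨆ i, ⨆ j, |C i j|)) :=
  sinkhorn_equicontinuity_corollary_general a b C γ hγ hC f g hiter
end

section
/- Let a, b ∈ ℝ_{++}ⁿ be strictly positive probability vectors, C ∈ ℝ₊^{n×n}, γ > 0, K := exp(−C/γ). Let (f_k, g_k, P_k) and the Greenkhorn update (f_{k+1}, g_{k+1}) be as follows: P_k := diag(e^{f_k/γ}) K diag(e^{g_k/γ}), I maximizes i ↦ ρ(a_i, (P_k𝟏ₙ)_i), J maximizes j ↦ ρ(b_j, (P_kᵀ𝟏ₙ)_j), and the single coordinate f_I (resp. g_J) is updated to exactly match the corresponding marginal, choosing the index with the larger ρ-value. If Σ_{i=1}^n ρ(a_i, (P_k𝟏ₙ)_i) > 1 or Σ_{j=1}^n ρ(b_j, (P_kᵀ𝟏ₙ)_j) > 1, then h(f_{k+1}, g_{k+1})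 − h(f_k, g_k) ≥ γ/n. -/
/-- The scalar Bregman divergence `ρ(x,y) = y − x + x log(x/y)`. -/
noncomputable def rho (x y : ℝ) : ℝ := y - x + x * Real.log (x / y)

/-!
Updating the single coordinate `f_I` changes `h` only through the terms of row `I`. If `f_I` is
chosen so that row `I` of the new plan has mass exactly `a_I`, the gain is `γ ρ(a_I, (P𝟏)_I)`, the
Bregman divergence of the old row mass; by the symmetry `(f, g, a, b, C) ↦ (g, f, b, a, Cᵀ)` of `h`
the same holds for columns. Greenkhorn updates the coordinate with the larger divergence, and a
maximal divergence is at least the average `(Σ_i ρ_i) / n > 1/n`.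
-/

open Matrix

lemma Fintype.sum_sub_sum_of_eq_of_ne {ι M : Type*} [Fintype ι] [AddCommGroup M] {φ ψ : ι → M}
    (I : ι) (h : ∀ i, i ≠ I → φ i = ψ i) : ∑ i, φ i - ∑ i, ψ i = φ I - ψ I := by
  rw [← Finset.sum_sub_distrib]
  exact Fintype.sum_eq_single I fun i hi => by rw [h i hi, sub_self]

lemma Fintype.sum_div_card_le_of_forall_le {ι : Type*} [Fintype ι] {φ : ι → ℝ} (I : ι)
    (hI : ∀ i, φ i ≤ φ I) : (∑ i, φ i) / Fintype.card ι ≤ φ I := by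
  have hcard : (0 : ℝ) < Fintype.card ι := by exact_mod_cast Fintype.card_pos_iff.mpr ⟨I⟩
  rw [div_le_iff₀ hcard]
  calc ∑ i, φ i ≤ Fintype.card ι • φ I := Finset.sum_le_card_nsmul _ _ _ fun i _ => hI i
    _ = φ I * Fintype.card ι := by rw [nsmul_eq_mul, mul_comm]

section Greenkhorn

variable {n : ℕ} (a b : Fin n → ℝ) (C : Matrix (Fin n) (Fin n) ℝ) {γ : ℝ} (f g : Fin n → ℝ)

lemma sum_exp_row_eq_exp_mul (y : ℝ) (I : Fin n) :
    ∑ j, Real.exp ((y + g j - C I j) / γ) =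
      Real.exp (y / γ) * ∑ j, Real.exp (-C I j / γ) * Real.exp (g j / γ) := by
  rw [Finset.mul_sum]
  refine Finset.sum_congr rfl fun j _ => ?_
  rw [← mul_assoc, ← Real.exp_add, ← Real.exp_add]
  ring_nf

lemma sum_plan_row (I : Fin n) :
    ∑ j, plan C γ f g I j =
      Real.exp (f I / γ) * ∑ j, Real.exp (-C I j / γ) * Real.exp (g j / γ) := by
  rw [Finset.mul_sum]
  exact Finset.sum_congr rfl fun j _ => mul_assoc _ _ _

lemma plan_transpose_apply (i j : Fin n) : plan Cᵀ γ g f j i = plan C γ f g i j := by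
  simp only [plan, Matrix.transpose_apply]
  ring

lemma dualObj_eq_transpose : dualObj a b C γ f g = dualObj b a Cᵀ γ g f := by
  simp only [dualObj, Matrix.transpose_apply]
  rw [Finset.sum_comm (f := fun i j => Real.exp ((f i + g j - C i j) / γ))]
  simp only [add_comm (f _)]
  ring

lemma dualObj_update_left_sub (I : Fin n) (x : ℝ) :
    dualObj a b C γ (Function.update f I x) g - dualObj a b C γ f g =
      (x - f I) * a I - γ * ((Real.exp (x / γ) - Real.exp (f I / γ)) *
        ∑ j, Real.exp (-C I j / γ) * Real.exp (g j / γ)) := by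
  have hlin := Fintype.sum_sub_sum_of_eq_of_ne (φ := fun i => Function.update f I x i * a i)
    (ψ := fun i => f i * a i) I fun i hi => by rw [Function.update_of_ne hi]
  have hexp := Fintype.sum_sub_sum_of_eq_of_ne
    (φ := fun i => ∑ j, Real.exp ((Function.update f I x i + g j - C i j) / γ))
    (ψ := fun i => ∑ j, Real.exp ((f i + g j - C i j) / γ)) I fun i hi => by
      simp only [Function.update_of_ne hi]
  simp only [Function.update_self] at hlin hexp
  rw [sum_exp_row_eq_exp_mul, sum_exp_row_eq_exp_mul] at hexp
  simp only [dualObj]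
  linear_combination hlin - γ * hexp

theorem dualObj_update_left_sub_eq_rho (hγ : γ ≠ 0) (I : Fin n) (haI : 0 < a I) :
    dualObj a b C γ (Function.update f I (γ * Real.log (a I) -
        γ * Real.log (∑ j, Real.exp (-C I j / γ) * Real.exp (g j / γ)))) g -
      dualObj a b C γ f g = γ * rho (a I) (∑ j, plan C γ f g I j) := by
  set S := ∑ j, Real.exp (-C I j / γ) * Real.exp (g j / γ)
  have hS : 0 < S := Finset.sum_pos (fun j _ => by positivity) ⟨I, Finset.mem_univ I⟩
  have hmatch : Real.exp ((γ * Real.log (a I) - γ * Real.log S) / γ) * S = a I := by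
    rw [← mul_sub, mul_div_cancel_left₀ _ hγ, ← Real.log_div haI.ne' hS.ne',
      Real.exp_log (div_pos haI hS), div_mul_cancel₀ _ hS.ne']
  have hrow := sum_plan_row C (γ := γ) f g I
  have hlog : Real.log (∑ j, plan C γ f g I j) = f I / γ + Real.log S := by
    rw [hrow, Real.log_mul (Real.exp_ne_zero _) hS.ne', Real.log_exp]
  have hrow_pos : 0 < ∑ j, plan C γ f g I j := by rw [hrow]; positivity
  rw [dualObj_update_left_sub, rho, Real.log_div haI.ne' hrow_pos.ne', hlog]
  have hcancel : γ * (f I / γ) = f I := mul_div_cancel₀ _ hγ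
  linear_combination -γ * hrow - γ * hmatch + a I * hcancel

theorem dualObj_update_right_sub_eq_rho (hγ : γ ≠ 0) (J : Fin n) (hbJ : 0 < b J) :
    dualObj a b C γ f (Function.update g J (γ * Real.log (b J) -
        γ * Real.log (∑ i, Real.exp (-C i J / γ) * Real.exp (f i / γ)))) -
      dualObj a b C γ f g = γ * rho (b J) (∑ i, plan C γ f g i J) := by
  have h := dualObj_update_left_sub_eq_rho b a Cᵀ g f hγ J hbJ
  simp only [Matrix.transpose_apply, plan_transpose_apply] at h
  rwa [dualObj_eq_transpose a b C f, dualObj_eq_transpose a b C f g]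

end Greenkhorn

theorem greenkhorn_improvement_large_general {n : ℕ} (a b : Fin n → ℝ)
    (C : Matrix (Fin n) (Fin n) ℝ) (γ : ℝ) (hγ : 0 < γ)
    (ha0 : ∀ i, 0 < a i) (hb0 : ∀ j, 0 < b j)
    (f g f' g' : Fin n → ℝ) (I J : Fin n)
    (hI : ∀ i, rho (a i) (∑ j, plan C γ f g i j) ≤ rho (a I) (∑ j, plan C γ f g I j))
    (hJ : ∀ j, rho (b j) (∑ i, plan C γ f g i j) ≤ rho (b J) (∑ i, plan C γ f g i J))
    (hupd₁ : rho (b J) (∑ i, plan C γ f g i J) < rho (a I) (∑ j, plan C γ f g I j) →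
      f' = Function.update f I (γ * Real.log (a I) -
          γ * Real.log (∑ j, Real.exp (-C I j / γ) * Real.exp (g j / γ))) ∧
      g' = g)
    (hupd₂ : ¬ (rho (b J) (∑ i, plan C γ f g i J) < rho (a I) (∑ j, plan C γ f g I j)) →
      f' = f ∧
      g' = Function.update g J (γ * Real.log (b J) -
          γ * Real.log (∑ i, Real.exp (-C i J / γ) * Real.exp (f i / γ))))
    (hlarge : 1 < ∑ i, rho (a i) (∑ j, plan C γ f g i j) ∨
      1 < ∑ j, rho (b j) (∑ i, plan C γ f g i j)) :
    γ / n ≤ dualObj a b C γ f' g' - dualObj a b C γ f g := by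
  set ρI := rho (a I) (∑ j, plan C γ f g I j)
  set ρJ := rho (b J) (∑ i, plan C γ f g i J)
  have hn : (0 : ℝ) < n := by exact_mod_cast I.pos
  have hmax : 1 / (n : ℝ) ≤ max ρI ρJ := by
    have hrow := Fintype.sum_div_card_le_of_forall_le I hI
    have hcol := Fintype.sum_div_card_le_of_forall_le J hJ
    rw [Fintype.card_fin] at hrow hcol
    rcases hlarge with h | h
    · exact le_max_of_le_left ((div_le_div_of_nonneg_right h.le hn.le).trans hrow)
    · exact le_max_of_le_right ((div_le_div_of_nonneg_right h.le hn.le).trans hcol)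
  have hgain : γ / n ≤ γ * max ρI ρJ := by
    rw [div_eq_mul_one_div]
    exact mul_le_mul_of_nonneg_left hmax hγ.le
  by_cases hc : ρJ < ρI
  · obtain ⟨hf', hg'⟩ := hupd₁ hc
    rw [hf', hg', dualObj_update_left_sub_eq_rho a b C f g hγ.ne' I (ha0 I)]
    rwa [max_eq_left hc.le] at hgain
  · obtain ⟨hf', hg'⟩ := hupd₂ hc
    rw [hf', hg', dualObj_update_right_sub_eq_rho a b C f g hγ.ne' J (hb0 J)]
    rwa [max_eq_right (not_lt.mp hc)] at hgain

/-- **One-iteration improvement of Greenkhorn, large-divergence regime**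
(Lemma 5/6 of Altschuler–Weed–Rigollet): if `Σ_i ρ(a_i,(P_k𝟏)_i) > 1` or
`Σ_j ρ(b_j,(P_kᵀ𝟏)_j) > 1`, then the Greenkhorn step satisfies
`h(f_{k+1},g_{k+1}) − h(f_k,g_k) ≥ γ/n`. -/
theorem greenkhorn_improvement_large {n : ℕ} (a b : Fin n → ℝ)
    (C : Matrix (Fin n) (Fin n) ℝ) (γ : ℝ) (hγ : 0 < γ)
    (ha0 : ∀ i, 0 < a i) (hb0 : ∀ j, 0 < b j)
    (ha1 : ∑ i, a i = 1) (hb1 : ∑ j, b j = 1)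
    (hC : ∀ i j, 0 ≤ C i j)
    (f g f' g' : Fin n → ℝ) (I J : Fin n)
    (hI : ∀ i, rho (a i) (∑ j, plan C γ f g i j) ≤ rho (a I) (∑ j, plan C γ f g I j))
    (hJ : ∀ j, rho (b j) (∑ i, plan C γ f g i j) ≤ rho (b J) (∑ i, plan C γ f g i J))
    (hupd₁ : rho (b J) (∑ i, plan C γ f g i J) < rho (a I) (∑ j, plan C γ f g I j) →
      f' = Function.update f I (γ * Real.log (a I) -
          γ * Real.log (∑ j, Real.exp (-C I j / γ) * Real.exp (g j / γ))) ∧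
      g' = g)
    (hupd₂ : ¬ (rho (b J) (∑ i, plan C γ f g i J) < rho (a I) (∑ j, plan C γ f g I j)) →
      f' = f ∧
      g' = Function.update g J (γ * Real.log (b J) -
          γ * Real.log (∑ i, Real.exp (-C i J / γ) * Real.exp (f i / γ))))
    (hlarge : 1 < ∑ i, rho (a i) (∑ j, plan C γ f g i j) ∨
      1 < ∑ j, rho (b j) (∑ i, plan C γ f g i j)) :
    γ / n ≤ dualObj a b C γ f' g' - dualObj a b C γ f g :=
  greenkhorn_improvement_large_general a b C γ hγ ha0 hb0 f g f' g' I J hI hJ hupd₁ hupd₂ hlarge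
end
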